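/- Let L = −a^{xx}(x)∂_x² − 2a^{xy}(x)∂_x∂_y − a^{yy}(x)∂_y² be uniformly elliptic on the sector S = {θ₀ < θ < θ₁, 0 < r < R} in polar coordinates, with θ₁ − θ₀ > π (and ≤ 2π), and suppose |a^{xx}|, |a^{xy}| ≤ C a^{yy} with ellipticity constants uniform on S. Then there exist ε ∈ (0,1) and θ₊ ∈ (θ₀, θ₁) such that the function s(r, θ) = r^{1−ε}(1 + a cos(θ − θ₊)), for appropriate a ≥ 1, satisfies L s ≤ 0 in S, s ≤ 0 on the two boundary radii θ = θ₀ and θ = θ₁, and s(r, θ₊) ≥ r^{1−ε} for 0 ≤ r ≤ R. -/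

import Mathlib

/-!
Take `θ₊` the bisector of the sector and `a = -1 / cos ((θ₁ - θ₀) / 2)`, which is `≥ 1` because
the half-opening exceeds `π / 2`; then `1 + a cos (θ - θ₊)` vanishes on both boundary radii.
In Cartesian coordinates `s = |p|^{1-ε} + a ⟨e, p⟩ |p|^{-ε}` with `e = (cos θ₊, sin θ₊)`, and
`A : D²s` splits into a radial part `(1 - ε) r^{-ε-3} (Q(p⊥) - ε Q(p)) ≥ (λ - ε(λ + Λ)) r^{-1-ε}`
and an angular part, which carries a factor `ε` and is at most `4 a ε Λ r^{-1-ε}` in absolute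
value (`Q` the coefficient form). Hence `A : D²s ≥ 0` once `ε (λ + (1 + 4a) Λ) ≤ λ`.
-/

open Real Set

noncomputable section

/-- In polar coordinates, with `(c, d) = (cos φ, sin φ)`, this is
`r^{2m} + a r^{2b+1} cos (θ - φ)`. -/
def cornerBarrier (m b a c d : ℝ) (p : ℝ × ℝ) : ℝ :=
  (p.1 ^ 2 + p.2 ^ 2) ^ m + a * ((c * p.1 + d * p.2) * (p.1 ^ 2 + p.2 ^ 2) ^ b)

def cornerBarrierDx (m b a c d x y : ℝ) : ℝ :=
  2 * m * x * (x ^ 2 + y ^ 2) ^ (m - 1)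
    + a * (c * (x ^ 2 + y ^ 2) ^ b + (c * x + d * y) * (2 * b * x * (x ^ 2 + y ^ 2) ^ (b - 1)))

def cornerBarrierDxx (m b a c d x y : ℝ) : ℝ :=
  2 * m * ((x ^ 2 + y ^ 2) ^ (m - 1) + 2 * (m - 1) * x ^ 2 * (x ^ 2 + y ^ 2) ^ (m - 2))
    + a * (4 * b * c * x * (x ^ 2 + y ^ 2) ^ (b - 1)
      + 2 * b * (c * x + d * y) * ((x ^ 2 + y ^ 2) ^ (b - 1)
        + 2 * (b - 1) * x ^ 2 * (x ^ 2 + y ^ 2) ^ (b - 2)))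

def cornerBarrierDxy (m b a c d x y : ℝ) : ℝ :=
  4 * m * (m - 1) * x * y * (x ^ 2 + y ^ 2) ^ (m - 2)
    + a * (2 * b * (c * y + d * x) * (x ^ 2 + y ^ 2) ^ (b - 1)
      + 4 * b * (b - 1) * x * y * (c * x + d * y) * (x ^ 2 + y ^ 2) ^ (b - 2))

def coeffForm (axx axy ayy : ℝ) (ξ η : ℝ × ℝ) : ℝ :=
  axx * ξ.1 * η.1 + axy * (ξ.1 * η.2 + ξ.2 * η.1) + ayy * ξ.2 * η.2

end

lemma coeffForm_self (axx axy ayy : ℝ) (ξ : ℝ × ℝ) :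
    coeffForm axx axy ayy ξ ξ = axx * ξ.1 ^ 2 + 2 * axy * ξ.1 * ξ.2 + ayy * ξ.2 ^ 2 := by
  simp only [coeffForm]; ring

/-- Swapping the coordinates together with `c` and `d` reduces `y`-derivatives to
`x`-derivatives. -/
lemma cornerBarrier_swap (m b a c d x y : ℝ) :
    cornerBarrier m b a c d (x, y) = cornerBarrier m b a d c (y, x) := by
  simp only [cornerBarrier]; ring_nf

section

open Filter Topology

lemma hasDerivAt_sq_add_rpow (k m t : ℝ) (h : t ^ 2 + k ≠ 0) :
    HasDerivAt (fun t => (t ^ 2 + k) ^ m) (2 * m * t * (t ^ 2 + k) ^ (m - 1)) t := by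
  have := ((hasDerivAt_pow 2 t).add_const k).rpow_const (p := m) (Or.inl h)
  convert this using 1; push_cast; ring

lemma hasDerivAt_add_sq_rpow (k m t : ℝ) (h : k + t ^ 2 ≠ 0) :
    HasDerivAt (fun t => (k + t ^ 2) ^ m) (2 * m * t * (k + t ^ 2) ^ (m - 1)) t := by
  simp only [add_comm k] at h ⊢
  exact hasDerivAt_sq_add_rpow k m t h

section

variable (m b a c d x y : ℝ)

lemma hasDerivAt_cornerBarrier_fst (hq : x ^ 2 + y ^ 2 ≠ 0) :
    HasDerivAt (fun t => cornerBarrier m b a c d (t, y)) (cornerBarrierDx m b a c d x y) x := by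
  have hℓ : HasDerivAt (fun t => c * t + d * y) c x := by
    simpa using ((hasDerivAt_id x).const_mul c).add_const (d * y)
  exact (hasDerivAt_sq_add_rpow _ m x hq).add
    ((hℓ.mul (hasDerivAt_sq_add_rpow _ b x hq)).const_mul a)

lemma hasDerivAt_cornerBarrierDx_fst (hq : x ^ 2 + y ^ 2 ≠ 0) :
    HasDerivAt (fun t => cornerBarrierDx m b a c d t y) (cornerBarrierDxx m b a c d x y) x := by
  have hℓ : HasDerivAt (fun t => c * t + d * y) c x := by
    simpa using ((hasDerivAt_id x).const_mul c).add_const (d * y)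
  have hlin (k : ℝ) : HasDerivAt (fun t => 2 * k * t) (2 * k) x := by
    simpa using (hasDerivAt_id x).const_mul (2 * k)
  have := ((hlin m).mul (hasDerivAt_sq_add_rpow _ (m - 1) x hq)).add
    ((((hasDerivAt_sq_add_rpow _ b x hq).const_mul c).add
      (hℓ.mul ((hlin b).mul (hasDerivAt_sq_add_rpow _ (b - 1) x hq)))).const_mul a)
  refine this.congr_deriv ?_
  simp only [cornerBarrierDxx, Pi.mul_apply, show m - 1 - 1 = m - 2 by ring,
    show b - 1 - 1 = b - 2 by ring]
  ring

lemma hasDerivAt_cornerBarrierDx_snd (hq : x ^ 2 + y ^ 2 ≠ 0) :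
    HasDerivAt (fun t => cornerBarrierDx m b a c d x t) (cornerBarrierDxy m b a c d x y) y := by
  have hℓ : HasDerivAt (fun t => c * x + d * t) d y := by
    simpa using ((hasDerivAt_id y).const_mul d).const_add (c * x)
  have := ((hasDerivAt_add_sq_rpow _ (m - 1) y hq).const_mul (2 * m * x)).add
    ((((hasDerivAt_add_sq_rpow _ b y hq).const_mul c).add
      (hℓ.mul ((hasDerivAt_add_sq_rpow _ (b - 1) y hq).const_mul (2 * b * x)))).const_mul a)
  refine this.congr_deriv ?_
  simp only [cornerBarrierDxy, show m - 1 - 1 = m - 2 by ring, show b - 1 - 1 = b - 2 by ring]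
  ring

lemma deriv_deriv_cornerBarrier_fst_fst (hq : x ^ 2 + y ^ 2 ≠ 0) :
    deriv (fun t => deriv (fun t' => cornerBarrier m b a c d (t', y)) t) x
      = cornerBarrierDxx m b a c d x y := by
  have hev : ∀ᶠ t in 𝓝 x, t ^ 2 + y ^ 2 ≠ 0 :=
    (by fun_prop : Continuous fun t : ℝ => t ^ 2 + y ^ 2).continuousAt.eventually_ne hq
  rw [EventuallyEq.deriv_eq
    (hev.mono fun t ht => (hasDerivAt_cornerBarrier_fst m b a c d t y ht).deriv)]
  exact (hasDerivAt_cornerBarrierDx_fst m b a c d x y hq).deriv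

lemma deriv_deriv_cornerBarrier_snd_snd (hq : x ^ 2 + y ^ 2 ≠ 0) :
    deriv (fun t => deriv (fun t' => cornerBarrier m b a c d (x, t')) t) y
      = cornerBarrierDxx m b a d c y x := by
  simp only [cornerBarrier_swap m b a c d x]
  exact deriv_deriv_cornerBarrier_fst_fst m b a d c y x (by rwa [add_comm])

lemma deriv_deriv_cornerBarrier_fst_snd (hq : x ^ 2 + y ^ 2 ≠ 0) :
    deriv (fun t => deriv (fun u => cornerBarrier m b a c d (t, u)) y) x
      = cornerBarrierDxy m b a d c y x := by
  have hev : ∀ᶠ t in 𝓝 x, y ^ 2 + t ^ 2 ≠ 0 :=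
    (by fun_prop : Continuous fun t : ℝ => y ^ 2 + t ^ 2).continuousAt.eventually_ne
      (by rwa [add_comm])
  simp only [cornerBarrier_swap m b a c d]
  rw [EventuallyEq.deriv_eq
    (hev.mono fun t ht => (hasDerivAt_cornerBarrier_fst m b a d c y t ht).deriv)]
  exact (hasDerivAt_cornerBarrierDx_snd m b a d c y x (by rwa [add_comm])).deriv

end

lemma continuous_linear_mul_rpow_sq_add_sq (c d : ℝ) {b : ℝ} (hb : -(1 / 2) < b) :
    Continuous fun p : ℝ × ℝ => (c * p.1 + d * p.2) * (p.1 ^ 2 + p.2 ^ 2) ^ b := by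
  refine continuous_iff_continuousAt.2 fun p => ?_
  by_cases hp : p.1 ^ 2 + p.2 ^ 2 = 0
  · have hp0 : p = 0 := by
      ext <;> simp only [Prod.fst_zero, Prod.snd_zero] <;> nlinarith [sq_nonneg p.1, sq_nonneg p.2]
    subst hp0
    have hbound (q : ℝ × ℝ) : ‖(c * q.1 + d * q.2) * (q.1 ^ 2 + q.2 ^ 2) ^ b‖
        ≤ √(c ^ 2 + d ^ 2) * (q.1 ^ 2 + q.2 ^ 2) ^ (b + 1 / 2) := by
      have hq : 0 ≤ q.1 ^ 2 + q.2 ^ 2 := by positivity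
      have hℓ : |c * q.1 + d * q.2| ≤ √(c ^ 2 + d ^ 2) * √(q.1 ^ 2 + q.2 ^ 2) := by
        rw [← sqrt_mul (by positivity)]
        exact abs_le_sqrt (by nlinarith [sq_nonneg (c * q.2 - d * q.1)])
      rw [norm_eq_abs, abs_mul, abs_of_nonneg (rpow_nonneg hq _),
        rpow_add' hq (by linarith), ← sqrt_eq_rpow, mul_comm (_ ^ b), ← mul_assoc]
      exact mul_le_mul_of_nonneg_right hℓ (rpow_nonneg hq _)
    have hlim : Tendsto (fun q : ℝ × ℝ => √(c ^ 2 + d ^ 2) * (q.1 ^ 2 + q.2 ^ 2) ^ (b + 1 / 2))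
        (𝓝 0) (𝓝 0) := by
      have : ContinuousAt
          (fun q : ℝ × ℝ => √(c ^ 2 + d ^ 2) * (q.1 ^ 2 + q.2 ^ 2) ^ (b + 1 / 2)) 0 := by
        fun_prop (disch := linarith)
      simpa [zero_rpow (by linarith : b + 2⁻¹ ≠ 0)] using this.tendsto
    simpa [ContinuousAt] using squeeze_zero_norm hbound hlim
  · fun_prop (disch := exact Or.inl hp)

end

lemma contDiffAt_cornerBarrier {n : WithTop ℕ∞} (m b a c d : ℝ) {p : ℝ × ℝ}
    (hp : p.1 ^ 2 + p.2 ^ 2 ≠ 0) : ContDiffAt ℝ n (cornerBarrier m b a c d) p := by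
  have hq : ContDiffAt ℝ n (fun p : ℝ × ℝ => p.1 ^ 2 + p.2 ^ 2) p := by fun_prop
  have hℓ : ContDiffAt ℝ n (fun p : ℝ × ℝ => c * p.1 + d * p.2) p := by fun_prop
  exact (hq.rpow_const_of_ne hp).add (contDiffAt_const.mul (hℓ.mul (hq.rpow_const_of_ne hp)))

lemma continuous_cornerBarrier {m b : ℝ} (a c d : ℝ) (hm : 0 ≤ m) (hb : -(1 / 2) < b) :
    Continuous (cornerBarrier m b a c d) :=
  ((by fun_prop : Continuous fun p : ℝ × ℝ => p.1 ^ 2 + p.2 ^ 2).rpow_const fun _ => Or.inr hm).add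
    (continuous_const.mul (continuous_linear_mul_rpow_sq_add_sq c d hb))

lemma mul_cos_sq_add_mul_sin_sq (r θ : ℝ) : (r * cos θ) ^ 2 + (r * sin θ) ^ 2 = r ^ 2 := by
  linear_combination r ^ 2 * sin_sq_add_cos_sq θ

lemma cornerBarrier_polar {ε : ℝ} (a φ : ℝ) {r : ℝ} (θ : ℝ) (hε : ε ≠ 1) (hr : 0 ≤ r) :
    cornerBarrier ((1 - ε) / 2) (-ε / 2) a (cos φ) (sin φ) (r * cos θ, r * sin θ)
      = r ^ (1 - ε) * (1 + a * cos (θ - φ)) := by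
  have hℓ : cos φ * (r * cos θ) + sin φ * (r * sin θ) = r * cos (θ - φ) := by
    rw [cos_sub]; ring
  have hpow (e : ℝ) : (r ^ 2) ^ (e / 2) = r ^ e := by
    rw [← rpow_natCast, ← rpow_mul hr]; congr 1; ring
  rw [cornerBarrier, mul_cos_sq_add_mul_sin_sq, hℓ, hpow, hpow]
  rcases hr.eq_or_lt with rfl | hr
  · simp [zero_rpow (sub_ne_zero.2 hε.symm)]
  · rw [show 1 - ε = 1 + -ε by ring, rpow_add hr, rpow_one]
    ring

lemma cornerBarrier_operator_eq (ε a c d axx axy ayy x y : ℝ) (hq : 0 < x ^ 2 + y ^ 2) :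
    axx * cornerBarrierDxx ((1 - ε) / 2) (-ε / 2) a c d x y
      + 2 * axy * cornerBarrierDxy ((1 - ε) / 2) (-ε / 2) a d c y x
      + ayy * cornerBarrierDxx ((1 - ε) / 2) (-ε / 2) a d c y x
    = (x ^ 2 + y ^ 2) ^ (-ε / 2 - 2) *
      (√(x ^ 2 + y ^ 2) * (1 - ε) * (coeffForm axx axy ayy (-y, x) (-y, x)
          - ε * coeffForm axx axy ayy (x, y) (x, y))
        - a * ε * ((1 - ε) * (c * x + d * y) * coeffForm axx axy ayy (x, y) (x, y)
          + (c * x + d * y) * coeffForm axx axy ayy (-y, x) (-y, x)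
          + 2 * (d * x - c * y) * coeffForm axx axy ayy (x, y) (-y, x))) := by
  have hstep (e : ℝ) : (x ^ 2 + y ^ 2) ^ (e - 1) = (x ^ 2 + y ^ 2) ^ (e - 2) * (x ^ 2 + y ^ 2) := by
    rw [← rpow_add_one hq.ne']; ring_nf
  have hhalf : (x ^ 2 + y ^ 2) ^ ((1 - ε) / 2 - 2)
      = (x ^ 2 + y ^ 2) ^ (-ε / 2 - 2) * √(x ^ 2 + y ^ 2) := by
    rw [sqrt_eq_rpow, ← rpow_add hq]; ring_nf
  simp only [cornerBarrierDxx, cornerBarrierDxy, coeffForm, add_comm (y ^ 2) (x ^ 2), hstep, hhalf]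
  ring

lemma angular_term_le_radial_term {ε a lam Lam r ℓ w Q Q' B : ℝ}
    (hε₀ : 0 ≤ ε) (hε₁ : ε ≤ 1) (ha : 0 ≤ a) (hlam : 0 ≤ lam)
    (hℓ : |ℓ| ≤ r) (hw : |w| ≤ r)
    (hQ : lam * r ^ 2 ≤ Q ∧ Q ≤ Lam * r ^ 2) (hQ' : lam * r ^ 2 ≤ Q' ∧ Q' ≤ Lam * r ^ 2)
    (hB : |B| ≤ Lam * r ^ 2) (hcoef : ε * (lam + (1 + 4 * a) * Lam) ≤ lam) :
    a * ε * ((1 - ε) * ℓ * Q + ℓ * Q' + 2 * w * B) ≤ r * (1 - ε) * (Q' - ε * Q) := by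
  have hr : 0 ≤ r := (abs_nonneg ℓ).trans hℓ
  have hLam : 0 ≤ Lam * r ^ 2 := (abs_nonneg B).trans hB
  have hQabs : |Q| ≤ Lam * r ^ 2 := abs_le.2 ⟨by nlinarith, hQ.2⟩
  have hQ'abs : |Q'| ≤ Lam * r ^ 2 := abs_le.2 ⟨by nlinarith, hQ'.2⟩
  have hangular : |(1 - ε) * ℓ * Q + ℓ * Q' + 2 * w * B| ≤ 4 * Lam * r ^ 3 := by
    calc |(1 - ε) * ℓ * Q + ℓ * Q' + 2 * w * B|
        ≤ (1 - ε) * |ℓ| * |Q| + |ℓ| * |Q'| + 2 * |w| * |B| := by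
          refine (abs_add_le _ _).trans (add_le_add ((abs_add_le _ _).trans ?_) ?_) <;>
            simp [abs_mul, abs_of_nonneg (sub_nonneg.2 hε₁)]
      _ ≤ (1 - ε) * r * (Lam * r ^ 2) + r * (Lam * r ^ 2) + 2 * r * (Lam * r ^ 2) := by
          gcongr
      _ ≤ 4 * Lam * r ^ 3 := by nlinarith [mul_nonneg (mul_nonneg hε₀ hr) hLam]
  have hradial : (lam - ε * (lam + Lam)) * r ^ 2 ≤ (1 - ε) * (Q' - ε * Q) := by
    nlinarith [mul_nonneg (sub_nonneg.2 hε₁) (sub_nonneg.2 hQ'.1),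
      mul_nonneg (mul_nonneg (sub_nonneg.2 hε₁) hε₀) (sub_nonneg.2 hQ.2),
      mul_nonneg (sq_nonneg ε) hLam]
  calc a * ε * ((1 - ε) * ℓ * Q + ℓ * Q' + 2 * w * B)
      ≤ a * ε * (4 * Lam * r ^ 3) :=
        mul_le_mul_of_nonneg_left ((le_abs_self _).trans hangular) (mul_nonneg ha hε₀)
    _ ≤ r * ((lam - ε * (lam + Lam)) * r ^ 2) := by nlinarith [pow_nonneg hr 3]
    _ ≤ r * (1 - ε) * (Q' - ε * Q) := by
        rw [mul_assoc]; exact mul_le_mul_of_nonneg_left hradial hr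

lemma exists_one_add_mul_cos_half_eq_zero {ω : ℝ} (h₁ : π < ω) (h₂ : ω < 3 * π) :
    ∃ a : ℝ, 1 ≤ a ∧ 1 + a * cos (ω / 2) = 0 := by
  have hneg : cos (ω / 2) < 0 :=
    cos_neg_of_pi_div_two_lt_of_lt (by linarith) (by linarith)
  refine ⟨-(cos (ω / 2))⁻¹, ?_, by rw [neg_mul, inv_mul_cancel₀ hneg.ne, add_neg_cancel]⟩
  rw [neg_inv, one_le_inv₀ (by linarith)]
  linarith [neg_one_le_cos (ω / 2)]

lemma abs_coeffForm_perp_le {lam Lam axx axy ayy : ℝ} (hlam : 0 ≤ lam)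
    (hell : ∀ ξ : ℝ × ℝ, lam * (ξ.1 ^ 2 + ξ.2 ^ 2) ≤ coeffForm axx axy ayy ξ ξ ∧
      coeffForm axx axy ayy ξ ξ ≤ Lam * (ξ.1 ^ 2 + ξ.2 ^ 2)) (x y : ℝ) :
    |coeffForm axx axy ayy (x, y) (-y, x)| ≤ Lam * (x ^ 2 + y ^ 2) := by
  have hexp : coeffForm axx axy ayy (x - y, x + y) (x - y, x + y)
      = coeffForm axx axy ayy (x, y) (x, y) + coeffForm axx axy ayy (-y, x) (-y, x) + 2 * coeffForm axx axy ayy (x, y) (-y, x) := by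
    simp only [coeffForm]; ring
  have hsum := hell (x - y, x + y)
  have hp := hell (x, y)
  have hperp := hell (-y, x)
  simp only [hexp, neg_sq, add_comm (y ^ 2) (x ^ 2),
    show (x - y) ^ 2 + (x + y) ^ 2 = 2 * (x ^ 2 + y ^ 2) by ring] at hsum hp hperp
  have := mul_nonneg hlam (add_nonneg (sq_nonneg x) (sq_nonneg y))
  exact abs_le.2 ⟨by linarith, by linarith⟩

lemma cornerBarrier_operator_nonneg {ε a lam Lam c d axx axy ayy : ℝ} {p : ℝ × ℝ}
    (hε₀ : 0 ≤ ε) (hε₁ : ε ≤ 1) (ha : 0 ≤ a) (hlam : 0 ≤ lam) (hcd : c ^ 2 + d ^ 2 = 1)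
    (hp : 0 < p.1 ^ 2 + p.2 ^ 2)
    (hell : ∀ ξ : ℝ × ℝ, lam * (ξ.1 ^ 2 + ξ.2 ^ 2) ≤ coeffForm axx axy ayy ξ ξ ∧
      coeffForm axx axy ayy ξ ξ ≤ Lam * (ξ.1 ^ 2 + ξ.2 ^ 2))
    (hcoef : ε * (lam + (1 + 4 * a) * Lam) ≤ lam) :
    let s := cornerBarrier ((1 - ε) / 2) (-ε / 2) a c d
    0 ≤ axx * deriv (fun x => deriv (fun x' => s (x', p.2)) x) p.1
      + 2 * axy * deriv (fun x => deriv (fun y => s (x, y)) p.2) p.1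
      + ayy * deriv (fun y => deriv (fun y' => s (p.1, y')) y) p.2 := by
  obtain ⟨x, y⟩ := p
  dsimp only at hp ⊢
  rw [deriv_deriv_cornerBarrier_fst_fst _ _ _ _ _ _ _ hp.ne',
    deriv_deriv_cornerBarrier_fst_snd _ _ _ _ _ _ _ hp.ne',
    deriv_deriv_cornerBarrier_snd_snd _ _ _ _ _ _ _ hp.ne',
    cornerBarrier_operator_eq _ _ _ _ _ _ _ _ _ hp]
  set r := √(x ^ 2 + y ^ 2)
  have hr : r ^ 2 = x ^ 2 + y ^ 2 := sq_sqrt hp.le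
  have hQ := hell (x, y)
  have hQperp := hell (-y, x)
  have hB := abs_coeffForm_perp_le hlam hell x y
  simp only [neg_sq, add_comm (y ^ 2) (x ^ 2), ← hr] at hQ hQperp hB
  have hℓw : (c * x + d * y) ^ 2 + (d * x - c * y) ^ 2 = x ^ 2 + y ^ 2 := by
    linear_combination (x ^ 2 + y ^ 2) * hcd
  have hℓ : |c * x + d * y| ≤ r := abs_le_sqrt (by nlinarith [sq_nonneg (d * x - c * y)])
  have hw : |d * x - c * y| ≤ r := abs_le_sqrt (by nlinarith [sq_nonneg (c * x + d * y)])
  exact mul_nonneg (rpow_nonneg hp.le _) (sub_nonneg.2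
    (angular_term_le_radial_term hε₀ hε₁ ha hlam hℓ hw hQ hQperp hB hcoef))

theorem stmt12_general (θ₀ θ₁ R lam Lam : ℝ)
    (hangle : π < θ₁ - θ₀) (hangle' : θ₁ - θ₀ ≤ 2 * π)
    (hlam : 0 < lam) (hLam : lam ≤ Lam)
    (axx axy ayy : ℝ × ℝ → ℝ)
    (S : Set (ℝ × ℝ))
    (hS : S = {p : ℝ × ℝ | ∃ r θ : ℝ, 0 < r ∧ r < R ∧ θ₀ < θ ∧ θ < θ₁ ∧
      p = (r * Real.cos θ, r * Real.sin θ)})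
    (hell : ∀ p ∈ S, ∀ ξ : ℝ × ℝ,
      lam * (ξ.1 ^ 2 + ξ.2 ^ 2)
          ≤ axx p * ξ.1 ^ 2 + 2 * axy p * ξ.1 * ξ.2 + ayy p * ξ.2 ^ 2 ∧
      axx p * ξ.1 ^ 2 + 2 * axy p * ξ.1 * ξ.2 + ayy p * ξ.2 ^ 2
          ≤ Lam * (ξ.1 ^ 2 + ξ.2 ^ 2)) :
    ∃ ε ∈ Ioo (0:ℝ) 1, ∃ θp ∈ Ioo θ₀ θ₁, ∃ a : ℝ, 1 ≤ a ∧
      ∃ s : ℝ × ℝ → ℝ,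
        ContDiffOn ℝ 2 s S ∧ ContinuousOn s (closure S) ∧
        (∀ r θ : ℝ, 0 ≤ r → r ≤ R → θ₀ ≤ θ → θ ≤ θ₁ →
          s (r * Real.cos θ, r * Real.sin θ)
            = r ^ (1 - ε) * (1 + a * Real.cos (θ - θp))) ∧
        (∀ p ∈ S,
          0 ≤ axx p * deriv (fun x => deriv (fun x' => s (x', p.2)) x) p.1
            + 2 * axy p * deriv (fun x => deriv (fun y => s (x, y)) p.2) p.1
            + ayy p * deriv (fun y => deriv (fun y' => s (p.1, y')) y) p.2) ∧
        (∀ r ∈ Icc (0:ℝ) R,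
          s (r * Real.cos θ₀, r * Real.sin θ₀) ≤ 0 ∧
          s (r * Real.cos θ₁, r * Real.sin θ₁) ≤ 0) ∧
        (∀ r ∈ Icc (0:ℝ) R,
          r ^ (1 - ε) ≤ s (r * Real.cos θp, r * Real.sin θp)) := by
  obtain ⟨a, ha, hzero⟩ := exists_one_add_mul_cos_half_eq_zero hangle (by linarith [pi_pos])
  set ε := lam / (lam + (1 + 4 * a) * Lam)
  have hden : 0 < lam + (1 + 4 * a) * Lam := by nlinarith
  have hε : ε ∈ Ioo 0 1 := ⟨div_pos hlam hden, (div_lt_one hden).2 (by nlinarith)⟩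
  have hcoef : ε * (lam + (1 + 4 * a) * Lam) ≤ lam := (div_mul_cancel₀ _ hden.ne').le
  set θp := (θ₀ + θ₁) / 2 with hθp
  have hpolar (r θ : ℝ) (hr : 0 ≤ r) := cornerBarrier_polar a θp θ hε.2.ne hr
  have hq : ∀ p ∈ S, 0 < p.1 ^ 2 + p.2 ^ 2 := by
    rintro _ hp
    obtain ⟨r, θ, hr, -, -, -, rfl⟩ := hS ▸ hp
    rw [mul_cos_sq_add_mul_sin_sq]
    positivity
  have hcos₀ : cos (θ₀ - θp) = cos ((θ₁ - θ₀) / 2) := by rw [← cos_neg]; congr 1; ring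
  have hcos₁ : cos (θ₁ - θp) = cos ((θ₁ - θ₀) / 2) := by congr 1; ring
  refine ⟨ε, hε, θp, ⟨by linarith, by linarith⟩, a, ha, _,
    fun p hp => (contDiffAt_cornerBarrier _ _ _ _ _ (hq p hp).ne').contDiffWithinAt,
    (continuous_cornerBarrier _ _ _ (by linarith [hε.2]) (by linarith [hε.2])).continuousOn,
    fun r θ hr _ _ _ => hpolar r θ hr,
    fun p hp => cornerBarrier_operator_nonneg hε.1.le hε.2.le (by linarith) hlam.le
      (cos_sq_add_sin_sq θp) (hq p hp) (by simpa only [coeffForm_self] using hell p hp) hcoef,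
    fun r hr => ?_, fun r hr => ?_⟩
  · simp [hpolar r _ hr.1, hcos₀, hcos₁, hzero]
  · rw [hpolar r _ hr.1, sub_self, cos_zero, mul_one]
    exact le_mul_of_one_le_right (rpow_nonneg hr.1 _) (by linarith)

/-- Subsolution at a protruding corner: for a uniformly elliptic operator
`L = −aˣˣ∂ₓ² − 2aˣʸ∂ₓ∂ᵧ − aʸʸ∂ᵧ²` on a sector of angle `> π` (and `≤ 2π`), with
`|aˣˣ|, |aˣʸ| ≤ C aʸʸ`, there are `ε ∈ (0,1)`, `θ₊ ∈ (θ₀,θ₁)`, `a ≥ 1` and a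
function `s` with `s(r,θ) = r^{1−ε}(1 + a cos(θ−θ₊))` on the sector, satisfying
`Ls ≤ 0` in the sector, `s ≤ 0` on the boundary radii and `s(r,θ₊) ≥ r^{1−ε}`. -/
theorem stmt12 (θ₀ θ₁ R lam Lam C : ℝ)
    (hangle : π < θ₁ - θ₀) (hangle' : θ₁ - θ₀ ≤ 2 * π) (hR : 0 < R)
    (hlam : 0 < lam) (hLam : lam ≤ Lam) (hC : 0 < C)
    (axx axy ayy : ℝ × ℝ → ℝ)
    (S : Set (ℝ × ℝ))
    (hS : S = {p : ℝ × ℝ | ∃ r θ : ℝ, 0 < r ∧ r < R ∧ θ₀ < θ ∧ θ < θ₁ ∧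
      p = (r * Real.cos θ, r * Real.sin θ)})
    (hell : ∀ p ∈ S, ∀ ξ : ℝ × ℝ,
      lam * (ξ.1 ^ 2 + ξ.2 ^ 2)
          ≤ axx p * ξ.1 ^ 2 + 2 * axy p * ξ.1 * ξ.2 + ayy p * ξ.2 ^ 2 ∧
      axx p * ξ.1 ^ 2 + 2 * axy p * ξ.1 * ξ.2 + ayy p * ξ.2 ^ 2
          ≤ Lam * (ξ.1 ^ 2 + ξ.2 ^ 2))
    (hbound : ∀ p ∈ S, |axx p| ≤ C * ayy p ∧ |axy p| ≤ C * ayy p) :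
    ∃ ε ∈ Ioo (0:ℝ) 1, ∃ θp ∈ Ioo θ₀ θ₁, ∃ a : ℝ, 1 ≤ a ∧
      ∃ s : ℝ × ℝ → ℝ,
        ContDiffOn ℝ 2 s S ∧ ContinuousOn s (closure S) ∧
        (∀ r θ : ℝ, 0 ≤ r → r ≤ R → θ₀ ≤ θ → θ ≤ θ₁ →
          s (r * Real.cos θ, r * Real.sin θ)
            = r ^ (1 - ε) * (1 + a * Real.cos (θ - θp))) ∧
        (∀ p ∈ S,
          0 ≤ axx p * deriv (fun x => deriv (fun x' => s (x', p.2)) x) p.1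
            + 2 * axy p * deriv (fun x => deriv (fun y => s (x, y)) p.2) p.1
            + ayy p * deriv (fun y => deriv (fun y' => s (p.1, y')) y) p.2) ∧
        (∀ r ∈ Icc (0:ℝ) R,
          s (r * Real.cos θ₀, r * Real.sin θ₀) ≤ 0 ∧
          s (r * Real.cos θ₁, r * Real.sin θ₁) ≤ 0) ∧
        (∀ r ∈ Icc (0:ℝ) R,
          r ^ (1 - ε) ≤ s (r * Real.cos θp, r * Real.sin θp)) :=
  stmt12_general θ₀ θ₁ R lam Lam hangle hangle' hlam hLam axx axy ayy S hS hell
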